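/- arXiv:0707.2134 — 3 statements merged into one kernel-verified Lean document; each statement's English description precedes it below -/
import Mathlib

section
/- Let {b_i} ∈ ℓ¹, a ∈ ℝ, {τ_i} strictly increasing positive reals with τ_i → ∞, and φ ∈ BC(-∞,0]. Then there exists a unique continuous function x: ℝ → ℝ with x(θ) = φ(θ) for θ ≤ 0, x continuously differentiable on [0,∞), and x'(t) = a x(t) + Σ_{i=1}^∞ b_i x(t - τ_i) for all t ≥ 0. -/
/-
Method of steps. All delays are at least `δ = τ 0 > 0`, so on `(-∞, (n + 1) δ]` the delay term
`∑ b i * x (t - τ i)` only sees `x` on `(-∞, n δ]`. Solving the scalar linear equation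
`x' = a x + F` by variation of constants, with the forcing `F` taken from the previous iterate,
therefore gives iterates that stabilise on `(-∞, n δ]` after `n` steps; their common extension is a
fixed point of the step, hence a solution (`{b i} ∈ ℓ¹` and the boundedness of `x` on half-lines
make the delay term summable and continuous). Uniqueness goes by the same steps: on `[n δ, (n + 1) δ]`
the difference of two solutions solves `z' = a z` with `z (n δ) = 0`, so it vanishes by Grönwall.
-/

open Filter

/-- x : ℝ → ℝ is a solution of the infinite-delay equation
x'(t) = a x(t) + Σ_i b_i x(t - τ_i) (t ≥ 0), x = φ on (-∞,0]:
x is continuous, agrees with φ on (-∞,0], and its restriction to [0,∞) is C¹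
with the required derivative. -/
def IsSolution (a : ℝ) (b τ : ℕ → ℝ) (φ x : ℝ → ℝ) : Prop :=
  Continuous x ∧ (∀ θ ≤ (0:ℝ), x θ = φ θ) ∧
  (∀ t ≥ (0:ℝ), Summable fun i => b i * x (t - τ i)) ∧
  (∀ t ≥ (0:ℝ), HasDerivWithinAt x (a * x t + ∑' i, b i * x (t - τ i)) (Set.Ici 0) t) ∧
  ContinuousOn (fun t => a * x t + ∑' i, b i * x (t - τ i)) (Set.Ici 0)

open Set

noncomputable def delayTerm (b τ : ℕ → ℝ) (g : ℝ → ℝ) (t : ℝ) : ℝ :=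
  ∑' i, b i * g (t - τ i)

noncomputable def variationOfConstants (a x₀ : ℝ) (F : ℝ → ℝ) (t : ℝ) : ℝ :=
  Real.exp (a * t) * (x₀ + ∫ s in (0:ℝ)..t, Real.exp (-(a * s)) * F s)

noncomputable def forcedSolution (a : ℝ) (φ F : ℝ → ℝ) (t : ℝ) : ℝ :=
  if t ≤ 0 then φ t else variationOfConstants a (φ 0) F t

section VariationOfConstants

variable {a x₀ : ℝ} {F G : ℝ → ℝ}

@[simp]
theorem variationOfConstants_zero : variationOfConstants a x₀ F 0 = x₀ := by
  simp [variationOfConstants]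

theorem hasDerivAt_variationOfConstants (hF : Continuous F) (t : ℝ) :
    HasDerivAt (variationOfConstants a x₀ F) (a * variationOfConstants a x₀ F t + F t) t := by
  have hint : Continuous fun s => Real.exp (-(a * s)) * F s := by fun_prop
  have hprim : HasDerivAt (fun u => ∫ s in (0:ℝ)..u, Real.exp (-(a * s)) * F s)
      (Real.exp (-(a * t)) * F t) t :=
    intervalIntegral.integral_hasDerivAt_right (hint.intervalIntegrable 0 t)
      (hint.stronglyMeasurableAtFilter _ _) hint.continuousAt
  have hexp : HasDerivAt (fun u => Real.exp (a * u)) (Real.exp (a * t) * a) t := by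
    simpa using ((hasDerivAt_id t).const_mul a).exp
  refine (hexp.mul (hprim.const_add x₀)).congr_deriv ?_
  have hinv : Real.exp (a * t) * Real.exp (-(a * t)) = 1 := by rw [← Real.exp_add]; simp
  unfold variationOfConstants
  linear_combination F t * hinv

theorem continuous_variationOfConstants (hF : Continuous F) :
    Continuous (variationOfConstants a x₀ F) :=
  continuous_iff_continuousAt.2 fun t => (hasDerivAt_variationOfConstants hF t).continuousAt

theorem variationOfConstants_congr {t : ℝ} (ht : 0 ≤ t) (h : EqOn F G (Icc 0 t)) :
    variationOfConstants a x₀ F t = variationOfConstants a x₀ G t := by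
  unfold variationOfConstants
  congr 2
  refine intervalIntegral.integral_congr fun s hs => ?_
  rw [uIcc_of_le ht] at hs
  simp only [h hs]

end VariationOfConstants

section ForcedSolution

variable {a : ℝ} {φ F G : ℝ → ℝ} {t : ℝ}

theorem forcedSolution_of_nonpos (ht : t ≤ 0) : forcedSolution a φ F t = φ t :=
  if_pos ht

theorem forcedSolution_of_nonneg (ht : 0 ≤ t) :
    forcedSolution a φ F t = variationOfConstants a (φ 0) F t := by
  rcases ht.eq_or_lt with rfl | ht
  · simp [forcedSolution]
  · exact if_neg ht.not_ge

theorem continuous_forcedSolution (hφ : ContinuousOn φ (Iic 0)) (hF : Continuous F) :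
    Continuous (forcedSolution a φ F) :=
  continuous_if_le continuous_id continuous_const hφ
    (continuous_variationOfConstants hF).continuousOn
    fun t (ht : t = 0) => by simp [ht]

theorem forcedSolution_congr {T : ℝ} (h : EqOn F G (Iic T)) :
    EqOn (forcedSolution a φ F) (forcedSolution a φ G) (Iic T) := by
  intro t ht
  rcases le_total t 0 with ht0 | ht0
  · rw [forcedSolution_of_nonpos ht0, forcedSolution_of_nonpos ht0]
  · rw [forcedSolution_of_nonneg ht0, forcedSolution_of_nonneg ht0]
    exact variationOfConstants_congr ht0 fun s hs => h (hs.2.trans ht)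

end ForcedSolution

section DelayTerm

variable {b τ : ℕ → ℝ} {g h : ℝ → ℝ}

theorem Continuous.exists_forall_Iic_abs_le (hg : Continuous g)
    (hg₀ : ∃ M, ∀ t ≤ 0, |g t| ≤ M) (T : ℝ) : ∃ M, ∀ t ≤ T, |g t| ≤ M := by
  obtain ⟨M₀, hM₀⟩ := hg₀
  obtain ⟨M₁, hM₁⟩ := (isCompact_Icc (a := 0) (b := T)).exists_bound_of_continuousOn
    hg.continuousOn
  refine ⟨max M₀ M₁, fun t ht => ?_⟩
  rcases le_total t 0 with ht₀ | ht₀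
  · exact (hM₀ t ht₀).trans (le_max_left _ _)
  · exact (hM₁ t ⟨ht₀, ht⟩).trans (le_max_right _ _)

theorem norm_mul_delay_le (hτ : ∀ i, 0 ≤ τ i) {M T : ℝ} (hM : ∀ t ≤ T, |g t| ≤ M) {t : ℝ}
    (ht : t ≤ T) (i : ℕ) : ‖b i * g (t - τ i)‖ ≤ |b i| * M := by
  rw [Real.norm_eq_abs, abs_mul]
  exact mul_le_mul_of_nonneg_left (hM _ (by linarith [hτ i])) (abs_nonneg _)

theorem summable_mul_delay (hb : Summable fun i => |b i|) (hτ : ∀ i, 0 ≤ τ i)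
    (hg : ∀ T, ∃ M, ∀ t ≤ T, |g t| ≤ M) (t : ℝ) : Summable fun i => b i * g (t - τ i) := by
  obtain ⟨M, hM⟩ := hg t
  exact .of_norm_bounded (hb.mul_right M) (norm_mul_delay_le hτ hM le_rfl)

theorem continuous_delayTerm (hb : Summable fun i => |b i|) (hτ : ∀ i, 0 ≤ τ i)
    (hgc : Continuous g) (hg : ∀ T, ∃ M, ∀ t ≤ T, |g t| ≤ M) : Continuous (delayTerm b τ g) := by
  refine continuous_iff_continuousAt.2 fun t => ?_
  obtain ⟨M, hM⟩ := hg (t + 1)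
  have : ContinuousOn (delayTerm b τ g) (Iic (t + 1)) :=
    continuousOn_tsum (fun i => by fun_prop) (hb.mul_right M)
      fun i s hs => norm_mul_delay_le hτ hM hs i
  exact this.continuousAt (Iic_mem_nhds (lt_add_one t))

theorem delayTerm_congr {δ T : ℝ} (hτδ : ∀ i, δ ≤ τ i) (hgh : EqOn g h (Iic T)) :
    EqOn (delayTerm b τ g) (delayTerm b τ h) (Iic (T + δ)) := by
  intro t (ht : t ≤ T + δ)
  refine tsum_congr fun i => ?_
  rw [hgh (show t - τ i ≤ T by linarith [hτδ i])]

end DelayTerm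

theorem exists_eqOn_Iic_of_eqOn_succ {β : Type*} {δ : ℝ} (hδ : 0 < δ) {f : ℕ → ℝ → β}
    (hf : ∀ n : ℕ, EqOn (f (n + 1)) (f n) (Iic (n * δ))) :
    ∃ x : ℝ → β, ∀ n : ℕ, EqOn x (f n) (Iic (n * δ)) := by
  have hmono : ∀ n m, n ≤ m → EqOn (f m) (f n) (Iic (n * δ)) := by
    intro n m hnm
    induction m, hnm using Nat.le_induction with
    | base => exact fun _ _ => rfl
    | succ m hnm ih =>
      have : (n : ℝ) * δ ≤ m * δ := by gcongr
      exact fun t ht => (hf m (ht.trans this)).trans (ih ht)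
  refine ⟨fun t => f ⌈t / δ⌉₊ t, fun n t (ht : t ≤ n * δ) => ?_⟩
  have hceil : t ≤ ⌈t / δ⌉₊ * δ := (div_le_iff₀ hδ).1 (Nat.le_ceil _)
  rcases le_total n ⌈t / δ⌉₊ with h | h
  · exact hmono _ _ h ht
  · exact (hmono _ _ h hceil).symm

theorem exists_nat_mul_gt {δ : ℝ} (hδ : 0 < δ) (t : ℝ) : ∃ n : ℕ, t < n * δ := by
  simpa only [nsmul_eq_mul] using exists_lt_nsmul hδ t

noncomputable def stepIterate (a : ℝ) (b τ : ℕ → ℝ) (φ : ℝ → ℝ) : ℕ → ℝ → ℝ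
  | 0 => forcedSolution a φ 0
  | n + 1 => forcedSolution a φ (delayTerm b τ (stepIterate a b τ φ n))

section DelayEquation

variable {a : ℝ} {b τ : ℕ → ℝ} {φ x y : ℝ → ℝ} {δ : ℝ}

theorem isSolution_of_eq_forcedSolution (hb : Summable fun i => |b i|) (hτ : ∀ i, 0 ≤ τ i)
    (hφb : ∃ M, ∀ θ ≤ (0:ℝ), |φ θ| ≤ M) (hxc : Continuous x)
    (hx : x = forcedSolution a φ (delayTerm b τ x)) : IsSolution a b τ φ x := by
  have hxφ : ∀ θ ≤ (0:ℝ), x θ = φ θ := fun θ hθ =>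
    (congrFun hx θ).trans (forcedSolution_of_nonpos hθ)
  have hxb := hxc.exists_forall_Iic_abs_le (by simpa +contextual only [hxφ] using hφb)
  have hF := continuous_delayTerm hb hτ hxc hxb
  refine ⟨hxc, hxφ, fun t _ => summable_mul_delay hb hτ hxb t, fun t ht => ?_,
    (continuous_const.mul hxc |>.add hF).continuousOn⟩
  have hvoc : EqOn x (variationOfConstants a (φ 0) (delayTerm b τ x)) (Ici 0) :=
    fun s hs => (congrFun hx s).trans (forcedSolution_of_nonneg hs)
  rw [hvoc ht]
  exact (hasDerivAt_variationOfConstants hF t).hasDerivWithinAt.congr hvoc (hvoc ht)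

theorem stepIterate_of_nonpos (n : ℕ) {t : ℝ} (ht : t ≤ 0) : stepIterate a b τ φ n t = φ t := by
  cases n <;> exact forcedSolution_of_nonpos ht

theorem continuous_stepIterate (hb : Summable fun i => |b i|) (hτ : ∀ i, 0 ≤ τ i)
    (hφc : ContinuousOn φ (Iic 0)) (hφb : ∃ M, ∀ θ ≤ (0:ℝ), |φ θ| ≤ M) (n : ℕ) :
    Continuous (stepIterate a b τ φ n) := by
  induction n with
  | zero => exact continuous_forcedSolution hφc continuous_const
  | succ n ih =>
    have hb₀ : ∃ M, ∀ t ≤ (0:ℝ), |stepIterate a b τ φ n t| ≤ M := by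
      simpa +contextual only [stepIterate_of_nonpos] using hφb
    exact continuous_forcedSolution hφc
      (continuous_delayTerm hb hτ ih (ih.exists_forall_Iic_abs_le hb₀))

theorem stepIterate_succ_eqOn (hτδ : ∀ i, δ ≤ τ i) (n : ℕ) :
    EqOn (stepIterate a b τ φ (n + 1)) (stepIterate a b τ φ n) (Iic (n * δ)) := by
  induction n with
  | zero =>
    intro t ht
    rw [Nat.cast_zero, zero_mul] at ht
    rw [stepIterate_of_nonpos _ ht, stepIterate_of_nonpos _ ht]
  | succ n ih =>
    rw [Nat.cast_succ, add_one_mul]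
    exact forcedSolution_congr (delayTerm_congr hτδ ih)

theorem exists_isSolution (hb : Summable fun i => |b i|) (hδ : 0 < δ) (hτδ : ∀ i, δ ≤ τ i)
    (hφc : ContinuousOn φ (Iic 0)) (hφb : ∃ M, ∀ θ ≤ (0:ℝ), |φ θ| ≤ M) :
    ∃ x, IsSolution a b τ φ x := by
  have hτ : ∀ i, 0 ≤ τ i := fun i => hδ.le.trans (hτδ i)
  obtain ⟨x, hx⟩ := exists_eqOn_Iic_of_eqOn_succ hδ (stepIterate_succ_eqOn (a := a) (φ := φ) hτδ)
  have hxc : Continuous x := continuous_iff_continuousAt.2 fun t => by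
    obtain ⟨n, hn⟩ := exists_nat_mul_gt hδ t
    exact (continuous_stepIterate hb hτ hφc hφb n).continuousAt.congr
      (eventuallyEq_of_mem (Iic_mem_nhds hn) (hx n).symm)
  -- up to `(n + 1) δ`, `x` is the `(n + 1)`-st iterate, whose delay term sees `x` only up to `n δ`
  have hfix : x = forcedSolution a φ (delayTerm b τ x) := funext fun t => by
    obtain ⟨n, hn⟩ := exists_nat_mul_gt hδ t
    have ht : t ≤ n * δ + δ := by linarith
    rw [hx (n + 1) (show t ≤ (n + 1 : ℕ) * δ by push_cast; linarith)]
    exact forcedSolution_congr (delayTerm_congr hτδ (hx n).symm) ht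
  exact ⟨x, isSolution_of_eq_forcedSolution hb hτ hφb hxc hfix⟩

theorem IsSolution.eqOn_Iic_add (hτδ : ∀ i, δ ≤ τ i) {T : ℝ} (hT : 0 ≤ T)
    (hx : IsSolution a b τ φ x) (hy : IsSolution a b τ φ y) (hxy : EqOn x y (Iic T)) :
    EqOn x y (Iic (T + δ)) := by
  obtain ⟨hxc, -, -, hx', -⟩ := hx
  obtain ⟨hyc, -, -, hy', -⟩ := hy
  have hdelay := delayTerm_congr (b := b) hτδ hxy
  have hz := eq_zero_of_abs_deriv_le_mul_abs_self_of_eq_zero_right (K := |a|)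
    (f := x - y) (f' := fun s => a * (x s - y s)) (a := T) (b := T + δ)
    (hxc.sub hyc).continuousOn
    (fun s hs => by
      have hs₀ : 0 ≤ s := hT.trans hs.1
      refine (((hx' s hs₀).sub (hy' s hs₀)).congr_deriv ?_).mono (Ici_subset_Ici.2 hs₀)
      change _ + delayTerm b τ x s - (_ + delayTerm b τ y s) = _
      rw [hdelay hs.2.le]
      ring)
    (sub_eq_zero.2 (hxy self_mem_Iic)) (fun s _ => by simp)
  intro t (ht : t ≤ T + δ)
  rcases le_total t T with htT | htT
  · exact hxy htT
  · exact sub_eq_zero.1 (hz t ⟨htT, ht⟩)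

theorem IsSolution.eq (hδ : 0 < δ) (hτδ : ∀ i, δ ≤ τ i) (hx : IsSolution a b τ φ x)
    (hy : IsSolution a b τ φ y) : x = y := by
  have hstep : ∀ n : ℕ, EqOn x y (Iic (n * δ)) := by
    intro n
    induction n with
    | zero =>
      intro t ht
      rw [Nat.cast_zero, zero_mul] at ht
      rw [hx.2.1 t ht, hy.2.1 t ht]
    | succ n ih =>
      rw [Nat.cast_succ, add_one_mul]
      exact hx.eqOn_Iic_add hτδ (by positivity) hy ih
  funext t
  obtain ⟨n, hn⟩ := exists_nat_mul_gt hδ t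
  exact hstep n hn.le

end DelayEquation

theorem exists_unique_solution_l1_general (a : ℝ) (b τ : ℕ → ℝ)
    (hb : Summable fun i => |b i|)
    (hτ : StrictMono τ) (hτpos : ∀ i, 0 < τ i)
    (φ : ℝ → ℝ) (hφc : ContinuousOn φ (Set.Iic 0))
    (hφb : ∃ M : ℝ, ∀ θ ≤ (0:ℝ), |φ θ| ≤ M) :
    ∃! x : ℝ → ℝ, IsSolution a b τ φ x := by
  have hτ₀ : ∀ i, τ 0 ≤ τ i := fun i => hτ.monotone (Nat.zero_le i)
  obtain ⟨x, hx⟩ := exists_isSolution hb (hτpos 0) hτ₀ hφc hφb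
  exact ⟨x, hx, fun y hy => hy.eq (hτpos 0) hτ₀ hx⟩

/-- For {b_i} ∈ ℓ¹, a ∈ ℝ, {τ_i} strictly increasing positive with
τ_i → ∞ and φ ∈ BC(-∞,0], the infinite delay equation has a unique solution. -/
theorem exists_unique_solution_l1 (a : ℝ) (b τ : ℕ → ℝ)
    (hb : Summable fun i => |b i|)
    (hτ : StrictMono τ) (hτpos : ∀ i, 0 < τ i)
    (hτtop : Tendsto τ atTop atTop)
    (φ : ℝ → ℝ) (hφc : ContinuousOn φ (Set.Iic 0))
    (hφb : ∃ M : ℝ, ∀ θ ≤ (0:ℝ), |φ θ| ≤ M) :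
    ∃! x : ℝ → ℝ, IsSolution a b τ φ x :=
  exists_unique_solution_l1_general a b τ hb hτ hτpos φ hφc hφb
end

section
/- Let {b_i} be an arbitrary real sequence and {τ_i} strictly increasing positive reals with τ_i → ∞. For k ∈ ℕ let n(k) be the smallest positive integer such that τ_i ≥ kτ₁ for all i ≥ n(k), and define seminorms p_k(φ) = Σ_{i=n(k)}^∞ sup_{s∈[0,kτ₁]} |b_i φ(s − τ_i)| and ‖φ‖_k = sup_{θ∈[−k,0]} |φ(θ)| on F = {φ ∈ C(-∞,0] : p_k(φ) < ∞ for all k}. Then F with the topology generated by {‖·‖_k} ∪ {p_k} is a Fréchet space (in particular, complete). -/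
/-!
Cauchy in every `‖·‖_k` means uniformly Cauchy on every `[-k, 0]`, so the sequence converges
locally uniformly on `(-∞, 0]` to a continuous limit `ψ`. Each term of `p_k` is a supremum over a
compact interval that only sees `φ` on `[-τ_i, 0]`, hence depends continuously on `φ` for locally
uniform convergence. Finite partial sums of `p_k(φ_j - ψ)` are therefore limits, as `j' → ∞`, of
partial sums of `p_k(φ_j - φ_j')`, which are small by the Cauchy property; this gives both
`p_k(ψ) < ∞` and `p_k(φ_j - ψ) → 0`.
-/

open Filter Set

/-- sup_{s ∈ [0, kτ₁]} |b_i φ(s − τ_i)|  (τ₁ = τ 0 with ℕ-indexing). -/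
noncomputable def pTerm (b τ : ℕ → ℝ) (φ : ℝ → ℝ) (k i : ℕ) : ℝ :=
  ⨆ s : Set.Icc (0:ℝ) ((k : ℝ) * τ 0), |b i * φ ((s : ℝ) - τ i)|

/-- The seminorm p_k(φ) = Σ_{i ≥ n(k)} sup_{s ∈ [0,kτ₁]} |b_i φ(s − τ_i)|. -/
noncomputable def pSemi (b τ : ℕ → ℝ) (n : ℕ → ℕ) (φ : ℝ → ℝ) (k : ℕ) : ℝ :=
  ∑' i : ℕ, pTerm b τ φ k (n k + i)

/-- The seminorm ‖φ‖_k = sup_{θ ∈ [−k,0]} |φ(θ)|. -/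
noncomputable def normSemi (φ : ℝ → ℝ) (k : ℕ) : ℝ :=
  ⨆ θ : Set.Icc (-(k:ℝ)) (0:ℝ), |φ (θ : ℝ)|

/-- n(k) is the smallest natural number such that τ_i ≥ kτ₁ for all i ≥ n(k). -/
def nSpec (τ : ℕ → ℝ) (n : ℕ → ℕ) : Prop :=
  ∀ k : ℕ, (∀ i, n k ≤ i → (k : ℝ) * τ 0 ≤ τ i) ∧
    ∀ m : ℕ, (∀ i, m ≤ i → (k : ℝ) * τ 0 ≤ τ i) → n k ≤ m

/-- Membership in the Fréchet space F: φ is continuous on (-∞,0] and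
p_k(φ) < ∞ (i.e. the defining series is summable) for every k. -/
def memF (b τ : ℕ → ℝ) (n : ℕ → ℕ) (φ : ℝ → ℝ) : Prop :=
  ContinuousOn φ (Set.Iic 0) ∧
    ∀ k : ℕ, Summable fun i => pTerm b τ φ k (n k + i)

open Topology

lemma tendsto_nhds_zero_of_forall_eventually_le {ι : Type*} {l : Filter ι} {u : ι → ℝ}
    (h0 : ∀ j, 0 ≤ u j) (h : ∀ ε > 0, ∀ᶠ j in l, u j ≤ ε) : Tendsto u l (𝓝 0) :=
  tendsto_order.2 ⟨fun _ ha => Eventually.of_forall fun j => ha.trans_le (h0 j),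
    fun _ ha => (h _ (half_pos ha)).mono fun _ hj => hj.trans_lt (half_lt_self ha)⟩

section Seminorms

variable {b τ : ℕ → ℝ} {n : ℕ → ℕ} {f g h : ℝ → ℝ} {F : ℕ → ℝ → ℝ} {k i m : ℕ}

lemma pTerm_nonneg (b τ : ℕ → ℝ) (f : ℝ → ℝ) (k i : ℕ) : 0 ≤ pTerm b τ f k i :=
  Real.iSup_nonneg fun _ => abs_nonneg _

lemma normSemi_nonneg (f : ℝ → ℝ) (k : ℕ) : 0 ≤ normSemi f k :=
  Real.iSup_nonneg fun _ => abs_nonneg _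

lemma abs_le_normSemi (hf : ContinuousOn f (Iic 0)) {θ : ℝ} (hθ : θ ∈ Icc (-(k : ℝ)) 0) :
    |f θ| ≤ normSemi f k := by
  have hbdd := (isCompact_Icc (a := -(k : ℝ)) (b := 0)).bddAbove_image
    (hf.mono Icc_subset_Iic_self).abs
  rw [image_eq_range] at hbdd
  exact le_ciSup hbdd ⟨θ, hθ⟩

lemma abs_mul_le_pTerm (hf : ContinuousOn f (Iic 0)) (hi : (k : ℝ) * τ 0 ≤ τ i)
    (s : Icc (0 : ℝ) (k * τ 0)) : |b i * f (s - τ i)| ≤ pTerm b τ f k i := by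
  have hmaps : MapsTo (fun s => s - τ i) (Icc (0 : ℝ) (k * τ 0)) (Iic 0) :=
    fun s hs => by simp only [mem_Iic]; linarith [hs.2]
  have hcont : ContinuousOn (fun s => |b i * f (s - τ i)|) (Icc 0 (k * τ 0)) :=
    (continuousOn_const.mul (hf.comp (continuousOn_id.sub continuousOn_const) hmaps)).abs
  have hbdd := isCompact_Icc.bddAbove_image hcont
  rw [image_eq_range] at hbdd
  exact le_ciSup hbdd s

lemma pTerm_le_add (hg : ContinuousOn g (Iic 0)) (hh : ContinuousOn h (Iic 0))
    (hi : (k : ℝ) * τ 0 ≤ τ i) (hfgh : ∀ x ≤ 0, |f x| ≤ |g x| + |h x|) :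
    pTerm b τ f k i ≤ pTerm b τ g k i + pTerm b τ h k i := by
  refine Real.iSup_le (fun s => ?_) (add_nonneg (pTerm_nonneg ..) (pTerm_nonneg ..))
  calc |b i * f (s - τ i)| ≤ |b i * g (s - τ i)| + |b i * h (s - τ i)| := by
        simp only [abs_mul, ← mul_add]
        exact mul_le_mul_of_nonneg_left (hfgh _ (by linarith [s.2.2])) (abs_nonneg _)
    _ ≤ pTerm b τ g k i + pTerm b τ h k i :=
        add_le_add (abs_mul_le_pTerm hg hi s) (abs_mul_le_pTerm hh hi s)

lemma abs_pTerm_sub_pTerm_le (hf : ContinuousOn f (Iic 0)) (hg : ContinuousOn g (Iic 0))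
    (hi : (k : ℝ) * τ 0 ≤ τ i) :
    |pTerm b τ f k i - pTerm b τ g k i| ≤ pTerm b τ (fun θ => f θ - g θ) k i := by
  have hf_le := pTerm_le_add (b := b) (f := f) hg (hf.fun_sub hg) hi fun x _ => by
    linarith [abs_sub_abs_le_abs_sub (f x) (g x)]
  have hg_le := pTerm_le_add (b := b) (f := g) hf (hf.fun_sub hg) hi fun x _ => by
    linarith [abs_sub_abs_le_abs_sub (g x) (f x), abs_sub_comm (f x) (g x)]
  exact abs_sub_le_iff.2 ⟨by linarith, by linarith⟩

lemma pTerm_le_abs_mul_normSemi (hf : ContinuousOn f (Iic 0)) (hi : (k : ℝ) * τ 0 ≤ τ i)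
    (him : τ i ≤ m) : pTerm b τ f k i ≤ |b i| * normSemi f m := by
  refine Real.iSup_le (fun s => ?_) (mul_nonneg (abs_nonneg _) (normSemi_nonneg _ _))
  rw [abs_mul]
  exact mul_le_mul_of_nonneg_left
    (abs_le_normSemi hf ⟨by linarith [s.2.1], by linarith [s.2.2]⟩) (abs_nonneg _)

lemma tendsto_normSemi_sub_of_tendstoUniformlyOn
    (hU : TendstoUniformlyOn F f atTop (Icc (-(m : ℝ)) 0)) :
    Tendsto (fun j => normSemi (fun θ => F j θ - f θ) m) atTop (𝓝 0) := by
  rw [Metric.tendstoUniformlyOn_iff] at hU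
  refine tendsto_nhds_zero_of_forall_eventually_le (fun _ => normSemi_nonneg _ _)
    fun ε hε => (hU ε hε).mono fun j hj => Real.iSup_le (fun θ => ?_) hε.le
  rw [← Real.dist_eq, dist_comm]
  exact (hj θ θ.2).le

lemma tendsto_pTerm_of_tendstoUniformlyOn (hF : ∀ j, ContinuousOn (F j) (Iic 0))
    (hf : ContinuousOn f (Iic 0)) (hi : (k : ℝ) * τ 0 ≤ τ i) (him : τ i ≤ m)
    (hU : TendstoUniformlyOn F f atTop (Icc (-(m : ℝ)) 0)) :
    Tendsto (fun j => pTerm b τ (F j) k i) atTop (𝓝 (pTerm b τ f k i)) := by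
  rw [tendsto_iff_dist_tendsto_zero]
  refine squeeze_zero (fun _ => dist_nonneg) (fun j => ?_)
    (by simpa using (tendsto_normSemi_sub_of_tendstoUniformlyOn hU).const_mul |b i|)
  calc dist (pTerm b τ (F j) k i) (pTerm b τ f k i)
      ≤ pTerm b τ (fun θ => F j θ - f θ) k i := abs_pTerm_sub_pTerm_le (hF j) hf hi
    _ ≤ |b i| * normSemi (fun θ => F j θ - f θ) m :=
        pTerm_le_abs_mul_normSemi ((hF j).fun_sub hf) hi him

lemma summable_pTerm_sub (hτn : ∀ i, (k : ℝ) * τ 0 ≤ τ (n k + i))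
    (hf : ContinuousOn f (Iic 0)) (hg : ContinuousOn g (Iic 0))
    (hfs : Summable fun i => pTerm b τ f k (n k + i))
    (hgs : Summable fun i => pTerm b τ g k (n k + i)) :
    Summable fun i => pTerm b τ (fun θ => f θ - g θ) k (n k + i) :=
  (hfs.add hgs).of_nonneg_of_le (fun _ => pTerm_nonneg ..)
    fun i => pTerm_le_add hf hg (hτn i) fun _ _ => abs_sub _ _

/-- The sublevel sets of `p_k` are closed under locally uniform convergence on `(-∞, 0]`. -/
lemma summable_pTerm_and_pSemi_le_of_tendstoUniformlyOn {ε : ℝ}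
    (hτn : ∀ i, (k : ℝ) * τ 0 ≤ τ (n k + i)) (hF : ∀ j, ContinuousOn (F j) (Iic 0))
    (hf : ContinuousOn f (Iic 0)) (hFs : ∀ j, Summable fun i => pTerm b τ (F j) k (n k + i))
    (hU : ∀ m : ℕ, TendstoUniformlyOn F f atTop (Icc (-(m : ℝ)) 0))
    (hε : ∀ᶠ j in atTop, pSemi b τ n (F j) k ≤ ε) :
    (Summable fun i => pTerm b τ f k (n k + i)) ∧ pSemi b τ n f k ≤ ε := by
  have hpartial : ∀ M, ∑ i ∈ Finset.range M, pTerm b τ f k (n k + i) ≤ ε := fun M =>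
    le_of_tendsto (x := (atTop : Filter ℕ))
      (tendsto_finsetSum _ fun i _ => tendsto_pTerm_of_tendstoUniformlyOn hF hf (hτn i)
        (Nat.le_ceil _) (hU ⌈τ (n k + i)⌉₊))
      (hε.mono fun j hj => ((hFs j).sum_le_tsum _ fun _ _ => pTerm_nonneg ..).trans hj)
  have hsum := summable_of_sum_range_le (fun _ => pTerm_nonneg ..) hpartial
  exact ⟨hsum, hsum.tsum_le_of_sum_range_le hpartial⟩

end Seminorms

lemma uniformCauchySeqOn_of_normSemi {φ : ℕ → ℝ → ℝ} {k : ℕ}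
    (hφ : ∀ j, ContinuousOn (φ j) (Iic 0))
    (h : ∀ ε > 0, ∃ N, ∀ j ≥ N, ∀ j' ≥ N, normSemi (fun θ => φ j θ - φ j' θ) k ≤ ε) :
    UniformCauchySeqOn φ atTop (Icc (-(k : ℝ)) 0) := by
  rw [Metric.uniformCauchySeqOn_iff]
  intro ε hε
  obtain ⟨N, hN⟩ := h (ε / 2) (half_pos hε)
  refine ⟨N, fun j hj j' hj' θ hθ => ?_⟩
  rw [Real.dist_eq]
  exact ((abs_le_normSemi ((hφ j).fun_sub (hφ j')) hθ).trans (hN j hj j' hj')).trans_lt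
    (half_lt_self hε)

lemma continuousOn_Iic_of_tendstoUniformlyOn_Icc {F : ℕ → ℝ → ℝ} {f : ℝ → ℝ}
    (hF : ∀ j, ContinuousOn (F j) (Iic 0))
    (hU : ∀ m : ℕ, TendstoUniformlyOn F f atTop (Icc (-(m : ℝ)) 0)) :
    ContinuousOn f (Iic 0) := by
  refine (tendstoLocallyUniformlyOn_of_forall_exists_nhds (p := atTop) fun x _ => ?_).continuousOn
    (Frequently.of_forall hF)
  obtain ⟨m, hm⟩ := exists_nat_gt (-x)
  refine ⟨Icc (-(m : ℝ)) 0, mem_of_superset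
    (inter_mem_nhdsWithin (Iic 0) (Ioi_mem_nhds (by linarith : -(m : ℝ) < x))) ?_, hU m⟩
  exact fun y hy => ⟨le_of_lt hy.2, hy.1⟩

theorem F_is_complete_general (b τ : ℕ → ℝ) (n : ℕ → ℕ)
    (hn : nSpec τ n)
    (φ : ℕ → ℝ → ℝ) (hmem : ∀ j, memF b τ n (φ j))
    (hcauchy : ∀ k : ℕ, ∀ ε > (0:ℝ), ∃ N : ℕ, ∀ j ≥ N, ∀ j' ≥ N,
      normSemi (fun θ => φ j θ - φ j' θ) k ≤ ε ∧
      pSemi b τ n (fun θ => φ j θ - φ j' θ) k ≤ ε) :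
    ∃ ψ : ℝ → ℝ, memF b τ n ψ ∧ ∀ k : ℕ,
      Tendsto (fun j => normSemi (fun θ => φ j θ - ψ θ) k) atTop (nhds 0) ∧
      Tendsto (fun j => pSemi b τ n (fun θ => φ j θ - ψ θ) k) atTop (nhds 0) := by
  have hτn : ∀ k i : ℕ, (k : ℝ) * τ 0 ≤ τ (n k + i) := fun k i => (hn k).1 _ (Nat.le_add_right _ _)
  have hφ : ∀ j, ContinuousOn (φ j) (Iic 0) := fun j => (hmem j).1
  have hUC : ∀ m : ℕ, UniformCauchySeqOn φ atTop (Icc (-(m : ℝ)) 0) := fun m =>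
    uniformCauchySeqOn_of_normSemi hφ fun ε hε =>
      (hcauchy m ε hε).imp fun _ hN j hj j' hj' => (hN j hj j' hj').1
  set ψ : ℝ → ℝ := fun θ => limUnder atTop fun j => φ j θ
  have hU : ∀ m : ℕ, TendstoUniformlyOn φ ψ atTop (Icc (-(m : ℝ)) 0) := fun m =>
    (hUC m).tendstoUniformlyOn_of_tendsto fun _ hθ => ((hUC m).cauchySeq hθ).tendsto_limUnder
  have hψ : ContinuousOn ψ (Iic 0) := continuousOn_Iic_of_tendstoUniformlyOn_Icc hφ hU
  have hp : ∀ k, ∀ ε > 0, ∀ᶠ j in atTop,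
      (Summable fun i => pTerm b τ (fun θ => φ j θ - ψ θ) k (n k + i)) ∧
        pSemi b τ n (fun θ => φ j θ - ψ θ) k ≤ ε := by
    intro k ε hε
    obtain ⟨N, hN⟩ := hcauchy k ε hε
    refine eventually_atTop.2 ⟨N, fun j hj => ?_⟩
    have hconst : TendstoUniformlyOn (fun _ : ℕ => φ j) (φ j) atTop (Iic 0) :=
      fun _ hu => Eventually.of_forall fun _ _ _ => refl_mem_uniformity hu
    exact summable_pTerm_and_pSemi_le_of_tendstoUniformlyOn (hτn k)
      (fun j' => (hφ j).fun_sub (hφ j')) ((hφ j).fun_sub hψ)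
      (fun j' => summable_pTerm_sub (hτn k) (hφ j) (hφ j') ((hmem j).2 k) ((hmem j').2 k))
      (fun m => (hconst.mono Icc_subset_Iic_self).fun_sub (hU m))
      (eventually_atTop.2 ⟨N, fun j' hj' => (hN j hj j' hj').2⟩)
  refine ⟨ψ, ⟨hψ, fun k => ?_⟩, fun k => ⟨tendsto_normSemi_sub_of_tendstoUniformlyOn (hU k), ?_⟩⟩
  · obtain ⟨j, hj, -⟩ := (hp k 1 one_pos).exists
    simpa using summable_pTerm_sub (hτn k) (hφ j) ((hφ j).fun_sub hψ) ((hmem j).2 k) hj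
  · exact tendsto_nhds_zero_of_forall_eventually_le (fun _ => tsum_nonneg fun _ => pTerm_nonneg ..)
      fun ε hε => (hp k ε hε).mono fun _ hj => hj.2

/-- F with the seminorms {‖·‖_k} ∪ {p_k} is a Fréchet space; the key
point is completeness: every sequence in F that is Cauchy with respect to every
seminorm converges in every seminorm to an element of F. -/
theorem F_is_complete (b τ : ℕ → ℝ) (n : ℕ → ℕ)
    (hτ : StrictMono τ) (hτpos : ∀ i, 0 < τ i)
    (hτtop : Tendsto τ atTop atTop) (hn : nSpec τ n)
    (φ : ℕ → ℝ → ℝ) (hmem : ∀ j, memF b τ n (φ j))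
    (hcauchy : ∀ k : ℕ, ∀ ε > (0:ℝ), ∃ N : ℕ, ∀ j ≥ N, ∀ j' ≥ N,
      normSemi (fun θ => φ j θ - φ j' θ) k ≤ ε ∧
      pSemi b τ n (fun θ => φ j θ - φ j' θ) k ≤ ε) :
    ∃ ψ : ℝ → ℝ, memF b τ n ψ ∧ ∀ k : ℕ,
      Tendsto (fun j => normSemi (fun θ => φ j θ - ψ θ) k) atTop (nhds 0) ∧
      Tendsto (fun j => pSemi b τ n (fun θ => φ j θ - ψ θ) k) atTop (nhds 0) :=
  F_is_complete_general b τ n hn φ hmem hcauchy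
end

section
/- Let {b_i} ∈ ℓ¹ and suppose a unique solution x_φ of the delay equation exists for each φ ∈ BC(-∞,0]. The operator A: D(A) → BC(-∞,0], Aψ = ψ', with D(A) = {ψ ∈ BC¹(-∞,0] : ψ'(0) = Σ_i b_i ψ(−τ_i)}, is not densely defined: the closure of D(A) in the sup norm is contained in the proper closed subspace BUC(-∞,0] of bounded uniformly continuous functions. -/
/-!
A function in `D(A)` has bounded derivative, so by the mean value theorem it is Lipschitz on
`(-∞, 0]`; a sup-norm limit of uniformly continuous functions is uniformly continuous. On the other
hand `θ ↦ sin (exp (-θ))` is bounded and continuous but oscillates ever faster as `θ → -∞`.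
-/

open Filter Real

theorem Metric.uniformContinuousOn_of_uniform_approx {α β : Type*} [UniformSpace α]
    [PseudoMetricSpace β] {f : α → β} {s : Set α}
    (h : ∀ ε > 0, ∃ F : α → β, UniformContinuousOn F s ∧ ∀ y ∈ s, dist (f y) (F y) ≤ ε) :
    UniformContinuousOn f s := by
  refine uniformContinuousOn_of_uniform_approx_of_uniformContinuousOn fun u hu => ?_
  obtain ⟨ε, hε, hεu⟩ := Metric.mem_uniformity_dist.1 hu
  obtain ⟨F, hF, hfF⟩ := h (ε / 2) (half_pos hε)
  exact ⟨F, hF, fun y hy => hεu ((hfF y hy).trans_lt (half_lt_self hε))⟩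

theorem Convex.uniformContinuousOn_of_norm_hasDerivWithin_le {E : Type*}
    [NormedAddCommGroup E] [NormedSpace ℝ E] {f f' : ℝ → E} {s : Set ℝ} {C : ℝ}
    (hs : Convex ℝ s) (hf : ∀ x ∈ s, HasDerivWithinAt f (f' x) s x)
    (bound : ∀ x ∈ s, ‖f' x‖ ≤ C) : UniformContinuousOn f s :=
  (hs.lipschitzOnWith_of_nnnorm_hasDerivWithin_le (C := C.toNNReal) hf fun x hx =>
    NNReal.le_toNNReal_of_coe_le (bound x hx)).uniformContinuousOn

theorem Real.dist_neg_log_le {a b : ℝ} (ha : 0 < a) (hab : a ≤ b) :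
    dist (-log b) (-log a) ≤ b / a - 1 := by
  have hba : 1 ≤ b / a := (one_le_div ha).2 hab
  rw [dist_comm, Real.dist_eq, neg_sub_neg, ← log_div (by linarith) ha.ne',
    abs_of_nonneg (log_nonneg hba)]
  exact log_le_sub_one_of_pos (by linarith)

theorem not_uniformContinuousOn_sin_exp_neg :
    ¬ UniformContinuousOn (fun θ => sin (exp (-θ))) (Set.Iic 0) := by
  intro h
  obtain ⟨δ, hδ, H⟩ := Metric.uniformContinuousOn_iff.1 h 1 one_pos
  obtain ⟨n, hn⟩ := exists_nat_one_div_lt hδ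
  have hmem : ∀ t ≥ 1, -log t ∈ Set.Iic 0 := fun t ht => neg_nonpos.2 (log_nonneg ht)
  have hval : ∀ t > 0, sin (exp (-(-log t))) = sin t := fun t ht => by rw [neg_neg, exp_log ht]
  -- `sin` vanishes at `a` and equals `1` at `a + π / 2`, two points that are close on the log scale
  obtain ⟨a, ha_def⟩ : ∃ a : ℝ, a = (n + 1 : ℕ) * (2 * π) := ⟨_, rfl⟩
  have ha : 1 ≤ a := by rw [ha_def]; push_cast; nlinarith [pi_gt_three]
  have hdist : dist (-log (a + π / 2)) (-log a) < δ :=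
    calc dist (-log (a + π / 2)) (-log a) ≤ (a + π / 2) / a - 1 :=
          dist_neg_log_le (by linarith) (by linarith [pi_pos])
      _ = 1 / (4 * (n + 1)) := by rw [ha_def]; push_cast; field_simp; ring
      _ ≤ 1 / (n + 1) := by gcongr; linarith
      _ < δ := hn
  have := H _ (hmem _ (by linarith [pi_pos])) _ (hmem _ ha) hdist
  rw [hval _ (by positivity), hval _ (by positivity), sin_add_pi_div_two, ha_def,
    cos_periodic.nat_mul_eq, sin_periodic.nat_mul_eq, cos_zero, sin_zero] at this
  norm_num at this

theorem domain_not_dense_general (b τ : ℕ → ℝ) :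
    -- closure of D(A) ⊆ BUC(-∞,0]
    (∀ φ : ℝ → ℝ, ContinuousOn φ (Set.Iic 0) → (∃ M : ℝ, ∀ θ ≤ (0:ℝ), |φ θ| ≤ M) →
      (∀ ε > (0:ℝ), ∃ ψ ψ' : ℝ → ℝ,
        (∀ θ ≤ (0:ℝ), HasDerivWithinAt ψ (ψ' θ) (Set.Iic 0) θ) ∧
        ContinuousOn ψ' (Set.Iic 0) ∧
        (∃ M : ℝ, ∀ θ ≤ (0:ℝ), |ψ θ| ≤ M) ∧
        (∃ M : ℝ, ∀ θ ≤ (0:ℝ), |ψ' θ| ≤ M) ∧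
        ψ' 0 = ∑' i, b i * ψ (-τ i) ∧
        (∀ θ ≤ (0:ℝ), |φ θ - ψ θ| ≤ ε)) →
      UniformContinuousOn φ (Set.Iic 0)) ∧
    -- BUC(-∞,0] is a proper subspace of BC(-∞,0]
    (∃ φ : ℝ → ℝ, ContinuousOn φ (Set.Iic 0) ∧ (∃ M : ℝ, ∀ θ ≤ (0:ℝ), |φ θ| ≤ M) ∧
      ¬ UniformContinuousOn φ (Set.Iic 0)) := by
  refine ⟨fun φ _ _ happrox => ?_, ?_⟩
  · refine Metric.uniformContinuousOn_of_uniform_approx fun ε hε => ?_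
    obtain ⟨ψ, ψ', hψ, -, -, ⟨M, hM⟩, -, hφψ⟩ := happrox ε hε
    exact ⟨ψ, (convex_Iic 0).uniformContinuousOn_of_norm_hasDerivWithin_le hψ hM, hφψ⟩
  · exact ⟨_, (by fun_prop : Continuous fun θ => sin (exp (-θ))).continuousOn,
      ⟨1, fun θ _ => abs_sin_le_one _⟩, not_uniformContinuousOn_sin_exp_neg⟩

/-- For {b_i} ∈ ℓ¹, the operator Aψ = ψ' with domain
D(A) = {ψ ∈ BC¹(-∞,0] : ψ'(0) = Σᵢ bᵢψ(−τᵢ)} is not densely defined in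
BC(-∞,0]: every sup-norm limit of elements of D(A) is uniformly continuous
(so the closure of D(A) lies in the proper closed subspace BUC(-∞,0]), while
there exist bounded continuous functions that are not uniformly continuous. -/
theorem domain_not_dense (b τ : ℕ → ℝ)
    (hb : Summable fun i => |b i|)
    (hτ : StrictMono τ) (hτpos : ∀ i, 0 < τ i)
    (hτtop : Tendsto τ atTop atTop) :
    -- closure of D(A) ⊆ BUC(-∞,0]
    (∀ φ : ℝ → ℝ, ContinuousOn φ (Set.Iic 0) → (∃ M : ℝ, ∀ θ ≤ (0:ℝ), |φ θ| ≤ M) →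
      (∀ ε > (0:ℝ), ∃ ψ ψ' : ℝ → ℝ,
        (∀ θ ≤ (0:ℝ), HasDerivWithinAt ψ (ψ' θ) (Set.Iic 0) θ) ∧
        ContinuousOn ψ' (Set.Iic 0) ∧
        (∃ M : ℝ, ∀ θ ≤ (0:ℝ), |ψ θ| ≤ M) ∧
        (∃ M : ℝ, ∀ θ ≤ (0:ℝ), |ψ' θ| ≤ M) ∧
        ψ' 0 = ∑' i, b i * ψ (-τ i) ∧
        (∀ θ ≤ (0:ℝ), |φ θ - ψ θ| ≤ ε)) →
      UniformContinuousOn φ (Set.Iic 0)) ∧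
    -- BUC(-∞,0] is a proper subspace of BC(-∞,0]
    (∃ φ : ℝ → ℝ, ContinuousOn φ (Set.Iic 0) ∧ (∃ M : ℝ, ∀ θ ≤ (0:ℝ), |φ θ| ≤ M) ∧
      ¬ UniformContinuousOn φ (Set.Iic 0)) :=
  domain_not_dense_general b τ
end
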